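/- For an injective vector x of length n, the sum of squared row sums of the sign matrix equals n(n² − 1)/3: Σ_{k=1}^{n} ( Σ_{l=1}^{n} sgn(x_k − x_l) )² = n(n² − 1)/3. -/

import Mathlib

/-!
Reorder the coordinates so that `x` is strictly increasing; this permutes both the rows and
the columns of the sign matrix, so it changes neither the row sums nor the sum of their squares.
Then the `k`-th row (counting from `0`) has `k` entries `1`, one `0` and `n - 1 - k` entries `-1`,
so its sum is `2k - (n - 1)`, and the theorem is the sum of these squares for `k < n`.
-/

open Finset

lemma Real.sign_sub_eq_of_strictMono {α : Type*} [LinearOrder α] {f g : α → ℝ}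
    (hf : StrictMono f) (hg : StrictMono g) (a b : α) :
    Real.sign (f a - f b) = Real.sign (g a - g b) := by
  rcases lt_trichotomy a b with h | rfl | h
  · rw [Real.sign_of_neg (sub_neg.2 (hf h)), Real.sign_of_neg (sub_neg.2 (hg h))]
  · simp
  · rw [Real.sign_of_pos (sub_pos.2 (hf h)), Real.sign_of_pos (sub_pos.2 (hg h))]

lemma sum_range_sign_natCast_sub {k n : ℕ} (hk : k < n) :
    ∑ l ∈ range n, Real.sign ((k : ℝ) - l) = 2 * k - (n - 1) := by
  obtain ⟨j, rfl⟩ : ∃ j, n = k + 1 + j := ⟨n - (k + 1), by omega⟩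
  have below : ∀ l ∈ range k, Real.sign ((k : ℝ) - l) = 1 := fun l hl =>
    Real.sign_of_pos (sub_pos.2 (by exact_mod_cast mem_range.1 hl))
  have above : ∀ i ∈ range j, Real.sign ((k : ℝ) - ↑(k + 1 + i)) = -1 := fun i _ =>
    Real.sign_of_neg (sub_neg.2 (by exact_mod_cast (by omega : k < k + 1 + i)))
  rw [sum_range_add, sum_range_succ, sum_congr rfl below, sum_congr rfl above]
  simp only [sum_const, card_range, nsmul_eq_mul, mul_one, sub_self, Real.sign_zero, add_zero,
    Nat.cast_add, Nat.cast_one]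
  ring

lemma sum_sign_sub_of_strictMono {n : ℕ} {x : Fin n → ℝ} (hx : StrictMono x) (k : Fin n) :
    ∑ l, Real.sign (x k - x l) = 2 * k - (n - 1) := by
  have hcast : StrictMono fun i : Fin n => ((i : ℕ) : ℝ) :=
    Nat.strictMono_cast.comp Fin.val_strictMono
  simp_rw [Real.sign_sub_eq_of_strictMono hx hcast k]
  rw [Fin.sum_univ_eq_sum_range (fun l => Real.sign ((k : ℝ) - l)),
    sum_range_sign_natCast_sub k.isLt]

lemma sum_range_two_mul_sub_sq (n : ℕ) (c : ℝ) :
    ∑ r ∈ range n, (2 * (r : ℝ) - c) ^ 2 =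
      2 * n * (n - 1) * (2 * n - 1) / 3 - 2 * c * n * (n - 1) + n * c ^ 2 := by
  induction n with
  | zero => simp
  | succ m ih => rw [sum_range_succ, ih]; push_cast; ring

theorem kemeny_row_sum_squares (n : ℕ) (x : Fin n → ℝ) (hx : Function.Injective x) :
    ∑ k : Fin n, (∑ l : Fin n, Real.sign (x k - x l)) ^ 2 =
      (n : ℝ) * ((n : ℝ) ^ 2 - 1) / 3 := by
  set σ := Tuple.sort x
  have hsorted : StrictMono (x ∘ σ) :=
    (Tuple.monotone_sort x).strictMono_of_injective (hx.comp σ.injective)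
  calc ∑ k, (∑ l, Real.sign (x k - x l)) ^ 2
      = ∑ k, (∑ l, Real.sign (x (σ k) - x (σ l))) ^ 2 := by
        rw [← Equiv.sum_comp σ]
        congr! 2 with k
        exact (Equiv.sum_comp σ _).symm
    _ = ∑ k : Fin n, (2 * ((k : ℕ) : ℝ) - (n - 1)) ^ 2 := by
        simp_rw [← Function.comp_apply (f := x), sum_sign_sub_of_strictMono hsorted]
    _ = (n : ℝ) * ((n : ℝ) ^ 2 - 1) / 3 := by
        rw [Fin.sum_univ_eq_sum_range (fun k => (2 * (k : ℝ) - (n - 1)) ^ 2),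
          sum_range_two_mul_sub_sq]
        ring
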